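/- Let X be a preordered topological space and let U be a completely prime complete filter of upper sets of X. Then there exists x ∈ X such that U is exactly the collection of upper sets of X containing x; moreover x is unique up to the equivalence ≤ ∩ ≥. -/

import Mathlib

/-!
The intersection `M` of all members of `𝒰` is an upper set lying in `𝒰`, and it is the union of the
principal upper sets `Ici x`, `x ∈ M`. Complete primeness puts one of these, `Ici x`, into `𝒰`;
then `𝒰` consists exactly of the upper sets containing `x`. Such a point is determined up to `≤ ∩ ≥`
because `x ≤ y` iff every upper set containing `x` contains `y`.
-/

open Set

section

variable {α : Type*} [Preorder α]

def principalUpperSets (x : α) : Set (Set α) := {A | IsUpperSet A ∧ x ∈ A}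

theorem principalUpperSets_subset_iff {x y : α} :
    principalUpperSets x ⊆ principalUpperSets y ↔ x ≤ y :=
  ⟨fun h => (h ⟨isUpperSet_Ici x, le_rfl⟩).2, fun hxy _ hA => ⟨hA.1, hA.1 hxy hA.2⟩⟩

theorem principalUpperSets_eq_iff {x y : α} :
    principalUpperSets x = principalUpperSets y ↔ x ≤ y ∧ y ≤ x := by
  rw [subset_antisymm_iff, principalUpperSets_subset_iff, principalUpperSets_subset_iff]

theorem IsUpperSet.sUnion_image_Ici {s : Set α} (hs : IsUpperSet s) : ⋃₀ (Ici '' s) = s := by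
  rw [sUnion_image, ← coe_upperClosure, upperClosure_eq.2 hs]

theorem IsUpperSet.exists_Ici_mem {𝒰 : Set (Set α)} {M : Set α} (hM : IsUpperSet M)
    (hprime : ∀ S : Set (Set α), (∀ A ∈ S, IsUpperSet A) → ⋃₀ S ∈ 𝒰 → ∃ A ∈ S, A ∈ 𝒰)
    (hM𝒰 : M ∈ 𝒰) : ∃ x ∈ M, Ici x ∈ 𝒰 := by
  obtain ⟨_, ⟨x, hxM, rfl⟩, hx⟩ :=
    hprime (Ici '' M) (forall_mem_image.2 fun x _ => isUpperSet_Ici x)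
      (by rwa [hM.sUnion_image_Ici])
  exact ⟨x, hxM, hx⟩

theorem eq_principalUpperSets {𝒰 : Set (Set α)} {x : α}
    (hupper : ∀ A ∈ 𝒰, IsUpperSet A)
    (hup : ∀ A B : Set α, IsUpperSet B → A ∈ 𝒰 → A ⊆ B → B ∈ 𝒰)
    (hmem : ∀ A ∈ 𝒰, x ∈ A) (hIci : Ici x ∈ 𝒰) : 𝒰 = principalUpperSets x := by
  ext A
  refine ⟨fun hA => ⟨hupper A hA, hmem A hA⟩, fun ⟨hA, hxA⟩ => ?_⟩
  exact hup (Ici x) A hA hIci fun _ hz => hA hz hxA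

end

theorem stmt11_general {X : Type*} [Preorder X]
    (𝒰 : Set (Set X))
    (hupper : ∀ A ∈ 𝒰, IsUpperSet A)
    (hup : ∀ A B : Set X, IsUpperSet B → A ∈ 𝒰 → A ⊆ B → B ∈ 𝒰)
    (hinf : ∀ S : Set (Set X), S ⊆ 𝒰 → ⋂₀ S ∈ 𝒰)
    (hprime : ∀ S : Set (Set X), (∀ A ∈ S, IsUpperSet A) → ⋃₀ S ∈ 𝒰 → ∃ A ∈ S, A ∈ 𝒰) :
    ∃ x : X, 𝒰 = {A : Set X | IsUpperSet A ∧ x ∈ A} ∧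
      ∀ y : X, 𝒰 = {A : Set X | IsUpperSet A ∧ y ∈ A} → x ≤ y ∧ y ≤ x := by
  obtain ⟨x, hx, hIci⟩ := (isUpperSet_sInter hupper).exists_Ici_mem hprime (hinf 𝒰 subset_rfl)
  have h𝒰 : 𝒰 = principalUpperSets x :=
    eq_principalUpperSets hupper hup (fun A hA => sInter_subset_of_mem hA hx) hIci
  exact ⟨x, h𝒰, fun y hy => principalUpperSets_eq_iff.1 (h𝒰.symm.trans hy)⟩

/-- Every completely prime complete filter of upper sets of a preordered
topological space is the collection of upper sets containing some point `x`,
unique up to the equivalence `≤ ∩ ≥`. -/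
theorem stmt11 {X : Type*} [TopologicalSpace X] [Preorder X]
    (𝒰 : Set (Set X))
    (hupper : ∀ A ∈ 𝒰, IsUpperSet A)
    (hup : ∀ A B : Set X, IsUpperSet B → A ∈ 𝒰 → A ⊆ B → B ∈ 𝒰)
    (hinf : ∀ S : Set (Set X), S ⊆ 𝒰 → ⋂₀ S ∈ 𝒰)
    (hprime : ∀ S : Set (Set X), (∀ A ∈ S, IsUpperSet A) → ⋃₀ S ∈ 𝒰 → ∃ A ∈ S, A ∈ 𝒰) :
    ∃ x : X, 𝒰 = {A : Set X | IsUpperSet A ∧ x ∈ A} ∧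
      ∀ y : X, 𝒰 = {A : Set X | IsUpperSet A ∧ y ∈ A} → x ≤ y ∧ y ≤ x :=
  stmt11_general 𝒰 hupper hup hinf hprime
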